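/- arXiv:1902.06781 — 2 statements merged into one kernel-verified Lean document; each statement's English description precedes it below -/
import Mathlib

section
/- Let λ > 1, μ' ≥ 0, δ > 0 and α > 0 satisfy μ'·α + δ < λ·α and 1 + α² < λ². Then there exist θ with 0 < θ < 1 and λ' with 1 < λ' < λ such that for all real numbers a, b, u, v with |a| ≤ μ', |b| ≤ δ and |u| ≤ α·|v|: (a) |a·u + b·v| ≤ θ·α·|λ·v| (so the image vector (a·u + b·v, λ·v) lies in the cone C_{θα}); and (b) √((a·u + b·v)² + (λ·v)²) ≥ λ'·√(u² + v²). -/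
noncomputable section

/-- Unstable cone estimate for the skew product `F(x,y) = (f_y(x), λy)`: under the
domination conditions `μ'·α + δ < λ·α` and `1 + α² < λ²`, there are `0 < θ < 1` and
`1 < λ' < λ` such that the derivative `[[a, b], [0, λ]]` (with `|a| ≤ μ'`, `|b| ≤ δ`)
maps the cone `C_α = {(u,v) : |u| ≤ α|v|}` into the smaller cone `C_{θα}` and expands
every vector of `C_α` by at least `λ'`. -/
theorem unstable_cone_field_estimate (lam mu' δ α : ℝ)
    (hlam : 1 < lam) (hmu' : 0 ≤ mu') (hδ : 0 < δ) (hα : 0 < α)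
    (hdom : mu' * α + δ < lam * α) (hdom2 : 1 + α ^ 2 < lam ^ 2) :
    ∃ θ : ℝ, 0 < θ ∧ θ < 1 ∧ ∃ lam' : ℝ, 1 < lam' ∧ lam' < lam ∧
      ∀ a b u v : ℝ, |a| ≤ mu' → |b| ≤ δ → |u| ≤ α * |v| →
        |a * u + b * v| ≤ θ * α * |lam * v| ∧
        Real.sqrt ((a * u + b * v) ^ 2 + (lam * v) ^ 2) ≥
          lam' * Real.sqrt (u ^ 2 + v ^ 2) := by
  have hlam0 : (0:ℝ) < lam := lt_trans one_pos hlam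
  have hla : 0 < lam * α := mul_pos hlam0 hα
  have hs1 : (1:ℝ) < 1 + α ^ 2 := by nlinarith
  have hsq : Real.sqrt (1 + α ^ 2) > 1 := by
    have := (Real.lt_sqrt (x := 1) (y := 1 + α ^ 2) zero_le_one).mpr (by simpa using hs1)
    exact this
  have hsqpos : 0 < Real.sqrt (1 + α ^ 2) := lt_trans one_pos hsq
  refine ⟨(mu' * α + δ) / (lam * α), ?_, ?_,
    lam / Real.sqrt (1 + α ^ 2), ?_, ?_, ?_⟩
  · positivity
  · exact (div_lt_one hla).mpr hdom
  · rw [lt_div_iff₀ hsqpos, one_mul]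
    have : Real.sqrt (1 + α ^ 2) < Real.sqrt (lam ^ 2) :=
      Real.sqrt_lt_sqrt (by positivity) hdom2
    rwa [Real.sqrt_sq hlam0.le] at this
  · rw [div_lt_iff₀ hsqpos]
    nlinarith
  · intro a b u v ha hb hu
    have hv : 0 ≤ |v| := abs_nonneg v
    constructor
    · have h1 : |a * u + b * v| ≤ (mu' * α + δ) * |v| := by
        calc |a * u + b * v| ≤ |a| * |u| + |b| * |v| := by
              simpa [abs_mul] using abs_add_le (a * u) (b * v)
          _ ≤ mu' * (α * |v|) + δ * |v| := by
              have h2 : |a| * |u| ≤ mu' * (α * |v|) :=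
                mul_le_mul ha hu (abs_nonneg u) hmu'
              have h3 : |b| * |v| ≤ δ * |v| :=
                mul_le_mul_of_nonneg_right hb hv
              linarith
          _ = (mu' * α + δ) * |v| := by ring
      have : (mu' * α + δ) / (lam * α) * α * |lam * v|
          = (mu' * α + δ) * |v| := by
        rw [abs_mul, abs_of_pos hlam0]
        field_simp
      linarith [this ▸ h1]
    · have h1 : lam / Real.sqrt (1 + α ^ 2) * Real.sqrt (u ^ 2 + v ^ 2)
          ≤ lam * |v| := by
        have huv : Real.sqrt (u ^ 2 + v ^ 2) ≤ Real.sqrt ((1 + α ^ 2) * v ^ 2) := by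
          apply Real.sqrt_le_sqrt
          have : u ^ 2 ≤ (α * |v|) ^ 2 := by
            have := sq_abs u
            nlinarith [abs_nonneg u, sq_abs u]
          nlinarith [sq_abs v]
        have heq : Real.sqrt ((1 + α ^ 2) * v ^ 2)
            = Real.sqrt (1 + α ^ 2) * |v| := by
          rw [Real.sqrt_mul (by positivity), Real.sqrt_sq_eq_abs]
        rw [div_mul_eq_mul_div, div_le_iff₀ hsqpos]
        calc lam * Real.sqrt (u ^ 2 + v ^ 2)
            ≤ lam * (Real.sqrt (1 + α ^ 2) * |v|) := by
              rw [← heq]; exact mul_le_mul_of_nonneg_left huv hlam0.le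
          _ = lam * |v| * Real.sqrt (1 + α ^ 2) := by ring
      have h2 : lam * |v| ≤ Real.sqrt ((a * u + b * v) ^ 2 + (lam * v) ^ 2) := by
        have : lam * |v| = Real.sqrt ((lam * v) ^ 2) := by
          rw [Real.sqrt_sq_eq_abs, abs_mul, abs_of_pos hlam0]
        rw [this]
        exact Real.sqrt_le_sqrt (by nlinarith [sq_nonneg (a * u + b * v)])
      exact le_trans h1 h2
end
end

section
/- Let μ', τ, ρ, λ be real numbers with μ' ≥ 0, τ ≥ 0, ρ ≥ 0 and (λ − τ) − τρ > 0. Let a, b, c, d ∈ ℝ satisfy |a| ≤ μ', |b| ≤ τ, |c| ≤ τ and |d − λ| ≤ τ, and let (u, v) ∈ ℝ² with |u| ≤ ρ·|v|. Then |c·u + d·v| ≥ ((λ − τ) − τρ)·|v| > 0 whenever v ≠ 0, and |a·u + b·v| ≤ ((μ'·ρ + τ)/((λ − τ) − τρ)) · |c·u + d·v|; in particular the image vector (a·u + b·v, c·u + d·v) of (u,v) has slope at most (μ'ρ + τ)/((λ − τ) − τρ). -/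
theorem abs_mul_add_mul_le {a b u v α β ρ : ℝ} (ha : |a| ≤ α) (hb : |b| ≤ β)
    (huv : |u| ≤ ρ * |v|) : |a * u + b * v| ≤ (α * ρ + β) * |v| := by
  have hau : |a * u| ≤ α * (ρ * |v|) := by
    rw [abs_mul]
    exact mul_le_mul ha huv (abs_nonneg u) ((abs_nonneg a).trans ha)
  have hbv : |b * v| ≤ β * |v| := by
    rw [abs_mul]
    exact mul_le_mul_of_nonneg_right hb (abs_nonneg v)
  calc |a * u + b * v| ≤ |a * u| + |b * v| := abs_add_le _ _
    _ ≤ (α * ρ + β) * |v| := by linarith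

theorem sub_mul_abs_le_abs_mul_add_mul {c d u v γ lam τ ρ : ℝ} (hc : |c| ≤ γ)
    (hd : |d - lam| ≤ τ) (huv : |u| ≤ ρ * |v|) :
    ((lam - τ) - γ * ρ) * |v| ≤ |c * u + d * v| := by
  have hd' : lam - τ ≤ |d| := by
    linarith [(abs_sub_le_iff.1 hd).2, le_abs_self d]
  have hdv : (lam - τ) * |v| ≤ |d * v| := by
    rw [abs_mul]
    exact mul_le_mul_of_nonneg_right hd' (abs_nonneg v)
  have hcu : |c * u| ≤ γ * (ρ * |v|) := by
    rw [abs_mul]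
    exact mul_le_mul hc huv (abs_nonneg u) ((abs_nonneg c).trans hc)
  calc ((lam - τ) - γ * ρ) * |v| ≤ |d * v| - |c * u| := by linarith
    _ ≤ |d * v + c * u| := by simpa using abs_sub_abs_le_abs_sub (d * v) (-(c * u))
    _ = |c * u + d * v| := by rw [add_comm]

/-- Slope estimate for a near-skew-product derivative `[[a, b], [c, d]]` with
`|a| ≤ μ'`, `|b| ≤ τ`, `|c| ≤ τ`, `|d − λ| ≤ τ`: a vector `(u,v)` of slope at most `ρ`
is sent to a vector whose second component satisfies `|cu + dv| ≥ ((λ−τ) − τρ)|v|`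
(positive when `v ≠ 0`) and whose slope is at most `(μ'ρ + τ)/((λ−τ) − τρ)`. -/
theorem slope_recursion_estimate (mu' τ ρ lam : ℝ)
    (hmu' : 0 ≤ mu') (hτ : 0 ≤ τ) (hρ : 0 ≤ ρ) (hpos : 0 < (lam - τ) - τ * ρ)
    (a b c d : ℝ) (ha : |a| ≤ mu') (hb : |b| ≤ τ) (hc : |c| ≤ τ) (hd : |d - lam| ≤ τ)
    (u v : ℝ) (huv : |u| ≤ ρ * |v|) :
    (v ≠ 0 → ((lam - τ) - τ * ρ) * |v| ≤ |c * u + d * v| ∧ 0 < |c * u + d * v|) ∧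
    |a * u + b * v| ≤ ((mu' * ρ + τ) / ((lam - τ) - τ * ρ)) * |c * u + d * v| := by
  have hlow := sub_mul_abs_le_abs_mul_add_mul hc hd huv
  refine ⟨fun hv => ⟨hlow, (mul_pos hpos (abs_pos.2 hv)).trans_le hlow⟩, ?_⟩
  calc |a * u + b * v| ≤ (mu' * ρ + τ) * |v| := abs_mul_add_mul_le ha hb huv
    _ = (mu' * ρ + τ) / ((lam - τ) - τ * ρ) * (((lam - τ) - τ * ρ) * |v|) := by
      rw [← mul_assoc, div_mul_cancel₀ _ hpos.ne']
    _ ≤ (mu' * ρ + τ) / ((lam - τ) - τ * ρ) * |c * u + d * v| := by gcongr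
end
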